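/- Let μ_n, μ be Borel probability measures on ℝ with distribution functions F_n, F and (right-continuous-inverse) quantile functions q_n, q : (0,1) → ℝ, q_n(x) = inf{u : F_n(u) > x}. If μ_n converges weakly to μ, then q_n(x) → q(x) for Lebesgue-almost every x ∈ (0,1), and under Lebesgue measure on (0,1) the function q_n has distribution μ_n. -/

import Mathlib

open MeasureTheory Filter Set Topology

noncomputable section

/-- A Young function: even, convex, vanishing exactly at 0, nondecreasing on ℝ₊,
tending to ∞ at ∞. -/
def IsYoung (Φ : ℝ → ℝ) : Prop :=
  (∀ x, Φ (-x) = Φ x) ∧ ConvexOn ℝ Set.univ Φ ∧ Φ 0 = 0 ∧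
  (∀ x, x ≠ 0 → 0 < Φ x) ∧ MonotoneOn Φ (Set.Ici 0) ∧
  Filter.Tendsto Φ Filter.atTop Filter.atTop

/-- A conjugate pair of Young functions, characterised by Young's inequality
`a*b ≤ Φ a + Ψ b`. -/
def IsConjugatePair (Φ Ψ : ℝ → ℝ) : Prop :=
  IsYoung Φ ∧ IsYoung Ψ ∧
  (∀ a b : ℝ, 0 ≤ a → 0 ≤ b → a * b ≤ Φ a + Ψ b)

/-- Membership in the Orlicz space `L^Φ`: `E[Φ(kξ)] < ∞` for some `k > 0`. -/
def MemLOrlicz {Ω : Type*} [MeasurableSpace Ω] (Φ : ℝ → ℝ) (P : Measure Ω) (ξ : Ω → ℝ) : Prop :=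
  Measurable ξ ∧ ∃ k : ℝ, 0 < k ∧ Integrable (fun ω => Φ (k * ξ ω)) P

/-- Membership in the Orlicz heart `M^Φ`: `E[Φ(kξ)] < ∞` for every `k > 0`. -/
def MemMOrlicz {Ω : Type*} [MeasurableSpace Ω] (Φ : ℝ → ℝ) (P : Measure Ω) (ξ : Ω → ℝ) : Prop :=
  Measurable ξ ∧ ∀ k : ℝ, 0 < k → Integrable (fun ω => Φ (k * ξ ω)) P

/-- The Luxemburg norm `inf {α > 0 : E[Φ(ξ/α)] ≤ 1}`. -/
def luxNorm {Ω : Type*} [MeasurableSpace Ω] (Φ : ℝ → ℝ) (P : Measure Ω) (ξ : Ω → ℝ) : ℝ :=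
  sInf {α : ℝ | 0 < α ∧ Integrable (fun ω => Φ (ξ ω / α)) P ∧ ∫ ω, Φ (ξ ω / α) ∂P ≤ 1}

/-- A probability density: nonnegative, integrable, integrating to 1. -/
def IsDensity {Ω : Type*} [MeasurableSpace Ω] (P : Measure Ω) (h : Ω → ℝ) : Prop :=
  Measurable h ∧ (∀ ω, 0 ≤ h ω) ∧ Integrable h P ∧ ∫ ω, h ω ∂P = 1

/-- The risk measure `ρ(η) = sup_{h ∈ S} E[η h]` on random variables. -/
def rho {Ω : Type*} [MeasurableSpace Ω] (P : Measure Ω) (S : Set (Ω → ℝ)) (η : Ω → ℝ) : ℝ :=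
  sSup ((fun h => ∫ ω, η ω * h ω ∂P) '' S)

/-- The (right-continuous-inverse) quantile function `q(x) = inf {u : F(u) > x}`. -/
def quantile (ν : Measure ℝ) (x : ℝ) : ℝ :=
  sInf {u : ℝ | x < (ν (Set.Iic u)).toReal}

/-- Lebesgue measure on the unit interval (0,1). -/
def P01 : Measure ℝ := volume.restrict (Set.Ioo (0:ℝ) 1)

/-- The increasing rearrangement of a function on (0,1): the quantile of its law. -/
def rearrange (h : ℝ → ℝ) : ℝ → ℝ := quantile (Measure.map h P01)

/-- The law-invariant risk measure on laws: `ρ(ν) = sup_{h ∈ S} ∫₀¹ q_ν h*`. -/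
def rhoLaw (S : Set (ℝ → ℝ)) (ν : Measure ℝ) : ℝ :=
  sSup ((fun h => ∫ u in Set.Ioo (0:ℝ) 1, quantile ν u * rearrange h u) '' S)

/-- Weak (weak-star) convergence of measures on ℝ, tested against bounded
continuous functions. -/
def WeakTendsto (μs : ℕ → Measure ℝ) (ν : Measure ℝ) : Prop :=
  ∀ g : BoundedContinuousFunction ℝ ℝ,
    Filter.Tendsto (fun n => ∫ x, g x ∂(μs n)) Filter.atTop (nhds (∫ x, g x ∂ν))

/-- The empirical measure `(1/N) ∑_{n<N} δ_{x n}`. -/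
def empMeasure (x : ℕ → ℝ) (N : ℕ) : Measure ℝ :=
  ((N : ENNReal)⁻¹) • ∑ n ∈ Finset.range N, Measure.dirac (x n)

/-- Ando's condition: `lim_{λ→∞} sup_{h ∈ A} λ E[Φ(h/λ)] = 0`. -/
def AndoCondition {Ω : Type*} [MeasurableSpace Ω] (Φ : ℝ → ℝ) (P : Measure Ω)
    (A : Set (Ω → ℝ)) : Prop :=
  Filter.Tendsto (fun lam : ℝ => sSup ((fun h => lam * ∫ ω, Φ (h ω / lam) ∂P) '' A))
    Filter.atTop (nhds 0)

/-- The pairing map `h ↦ (g ↦ E[h g])` against a set `G` of test functions. -/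
def pairingMap {Ω : Type*} [MeasurableSpace Ω] (P : Measure Ω) (G : Set (Ω → ℝ))
    (h : Ω → ℝ) : G → ℝ := fun g => ∫ ω, h ω * g.1 ω ∂P

/-- The weak topology `σ(·, G)` on functions, induced by the pairings against `G`. -/
def weakTopology {Ω : Type*} [MeasurableSpace Ω] (P : Measure Ω) (G : Set (Ω → ℝ)) :
    TopologicalSpace (Ω → ℝ) :=
  TopologicalSpace.induced (pairingMap P G) Pi.topologicalSpace

/-!
Weak convergence gives `F_n(u) → F(u)` for every non-atom `u` of `ν`, a dense set. If `b < q(x)`,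
left-continuity of `q` at `x` yields `x' < x` and a non-atom `u` with `b < u < q(x')`, so
`F(u) ≤ x' < x`, hence eventually `F_n(u) < x` and `u ≤ q_n(x)`; symmetrically `q(x) < u < b`
with `F(u) > x` gives eventually `q_n(x) ≤ u`. As `q` is monotone on `(0,1)`, it is continuous
off a countable, hence Lebesgue-null, set. The distributional identity is inverse transform
sampling: `(0, F(u)) ⊆ {x ∈ (0,1) | q(x) ≤ u} ⊆ (0, F(u)]`.
-/

open ProbabilityTheory

instance : IsProbabilityMeasure P01 := by
  constructor
  simp [P01, Real.volume_Ioo]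

section Quantile

variable {ν : Measure ℝ} {x u : ℝ}

lemma nonempty_setOf_lt_cdf (hx : x < 1) : {u | x < cdf ν u}.Nonempty :=
  ((tendsto_cdf_atTop ν).eventually_const_lt hx).exists

lemma bddBelow_setOf_lt_cdf (hx : 0 < x) : BddBelow {u | x < cdf ν u} := by
  obtain ⟨u₀, hu₀⟩ := ((tendsto_cdf_atBot ν).eventually_lt_const hx).exists
  exact ⟨u₀, fun v hv => not_lt.1 fun hvu =>
    lt_asymm (hv.trans_le (monotone_cdf ν hvu.le)) hu₀⟩

variable [IsProbabilityMeasure ν]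

lemma quantile_eq_sInf_cdf (x : ℝ) : quantile ν x = sInf {u | x < cdf ν u} := by
  simp only [quantile, cdf_eq_real, measureReal_def]

lemma quantile_le_of_lt_cdf (hx : 0 < x) (h : x < cdf ν u) : quantile ν x ≤ u := by
  rw [quantile_eq_sInf_cdf]
  exact csInf_le (bddBelow_setOf_lt_cdf hx) h

lemma le_quantile_of_cdf_le (hx : x < 1) (h : cdf ν u ≤ x) : u ≤ quantile ν x := by
  rw [quantile_eq_sInf_cdf]
  exact le_csInf (nonempty_setOf_lt_cdf hx) fun v hv =>
    not_lt.1 fun hvu => (h.trans_lt hv).not_ge (monotone_cdf ν hvu.le)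

lemma lt_cdf_of_quantile_lt (hx : x < 1) (h : quantile ν x < u) : x < cdf ν u :=
  not_le.1 fun hu => (le_quantile_of_cdf_le hx hu).not_gt h

lemma le_cdf_of_quantile_le (hx : x < 1) (h : quantile ν x ≤ u) : x ≤ cdf ν u := by
  have hright : Tendsto (cdf ν) (𝓝[>] u) (𝓝 (cdf ν u)) :=
    ((cdf ν).right_continuous u).tendsto.mono_left (nhdsWithin_mono u Ioi_subset_Ici_self)
  exact ge_of_tendsto hright (eventually_nhdsWithin_of_forall fun v hv =>
    (lt_cdf_of_quantile_lt hx (h.trans_lt hv)).le)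

lemma monotoneOn_quantile : MonotoneOn (quantile ν) (Ioo 0 1) := fun a ha b hb hab => by
  simp only [quantile_eq_sInf_cdf]
  exact csInf_le_csInf (bddBelow_setOf_lt_cdf ha.1) (nonempty_setOf_lt_cdf hb.2)
    fun u hu => hab.trans_lt hu

lemma map_quantile_P01 : Measure.map (quantile ν) P01 = ν := by
  have hmeas : AEMeasurable (quantile ν) P01 :=
    aemeasurable_restrict_of_monotoneOn measurableSet_Ioo monotoneOn_quantile
  have := Measure.isProbabilityMeasure_map hmeas
  refine Measure.ext_of_Iic _ _ fun u => ?_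
  rw [Measure.map_apply_of_aemeasurable hmeas measurableSet_Iic, P01,
    Measure.restrict_apply' measurableSet_Ioo, ← ofReal_cdf]
  have hlower : Ioo 0 (cdf ν u) ⊆ quantile ν ⁻¹' Iic u ∩ Ioo 0 1 := fun x hx =>
    ⟨quantile_le_of_lt_cdf hx.1 hx.2, hx.1, hx.2.trans_le (cdf_le_one ν u)⟩
  have hupper : quantile ν ⁻¹' Iic u ∩ Ioo 0 1 ⊆ Ioc 0 (cdf ν u) := fun x hx =>
    ⟨hx.2.1, le_cdf_of_quantile_le hx.2.2 hx.1⟩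
  apply le_antisymm
  · simpa [Real.volume_Ioc] using measure_mono (μ := volume) hupper
  · simpa [Real.volume_Ioo] using measure_mono (μ := volume) hlower

end Quantile

lemma dense_setOf_measure_singleton_eq_zero (ν : Measure ℝ) [SFinite ν] :
    Dense {u : ℝ | ν {u} = 0} := by
  have hatoms : {u : ℝ | 0 < ν {u}}.Countable :=
    Measure.countable_meas_level_set_pos measurable_id
  simpa [pos_iff_ne_zero, compl_ofPred] using hatoms.dense_compl ℝ

lemma tendsto_cdf_of_weakTendsto {μs : ℕ → Measure ℝ} {ν : Measure ℝ}
    [∀ n, IsProbabilityMeasure (μs n)] [IsProbabilityMeasure ν] (hw : WeakTendsto μs ν)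
    {u : ℝ} (hu : ν {u} = 0) :
    Tendsto (fun n => cdf (μs n) u) atTop (𝓝 (cdf ν u)) := by
  let P : ℕ → ProbabilityMeasure ℝ := fun n => ⟨μs n, inferInstance⟩
  let P₀ : ProbabilityMeasure ℝ := ⟨ν, inferInstance⟩
  have hP : Tendsto P atTop (𝓝 P₀) :=
    ProbabilityMeasure.tendsto_iff_forall_integral_tendsto.2 hw
  have hfrontier : P₀ (frontier (Iic u)) = 0 := by simp [P₀, hu]
  simp only [cdf_eq_real]
  exact NNReal.tendsto_coe.2
    (ProbabilityMeasure.tendsto_measure_of_null_frontier_of_tendsto hP hfrontier)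

lemma tendsto_quantile_of_tendsto_cdf {μs : ℕ → Measure ℝ} {ν : Measure ℝ}
    [∀ n, IsProbabilityMeasure (μs n)] [IsProbabilityMeasure ν]
    (hD : Dense {u | Tendsto (fun n => cdf (μs n) u) atTop (𝓝 (cdf ν u))})
    {x : ℝ} (hx : x ∈ Ioo (0 : ℝ) 1) (hc : ContinuousAt (quantile ν) x) :
    Tendsto (fun n => quantile (μs n) x) atTop (𝓝 (quantile ν x)) := by
  refine tendsto_order.2 ⟨fun b hb => ?_, fun b hb => ?_⟩
  · obtain ⟨x', hbx', hx'⟩ : ∃ x', b < quantile ν x' ∧ x' ∈ Ioo 0 x :=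
      (((hc.tendsto.mono_left nhdsWithin_le_nhds).eventually (lt_mem_nhds hb)).and
        (Ioo_mem_nhdsLT hx.1)).exists
    obtain ⟨u, hu, hbu, hux'⟩ := hD.exists_between hbx'
    have hcdf : cdf ν u ≤ x' := not_lt.1 fun h => (quantile_le_of_lt_cdf hx'.1 h).not_gt hux'
    filter_upwards [hu.eventually_lt_const (hcdf.trans_lt hx'.2)] with n hn
    exact hbu.trans_le (le_quantile_of_cdf_le hx.2 hn.le)
  · obtain ⟨u, hu, hqu, hub⟩ := hD.exists_between hb
    filter_upwards [hu.eventually_const_lt (lt_cdf_of_quantile_lt hx.2 hqu)] with n hn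
    exact (quantile_le_of_lt_cdf hx.1 hn).trans_lt hub

/-- Skorohod-type lemma. If `μ_n → μ` weakly then the quantile functions
converge a.e. on (0,1), and under Lebesgue measure on (0,1) the quantile of `μ_n`
has distribution `μ_n`. -/
theorem quantile_tendsto_ae_of_weakTendsto
    (μs : ℕ → Measure ℝ) (ν : Measure ℝ)
    [∀ n, IsProbabilityMeasure (μs n)] [IsProbabilityMeasure ν]
    (hw : WeakTendsto μs ν) :
    (∀ᵐ x ∂P01,
      Filter.Tendsto (fun n => quantile (μs n) x) Filter.atTop (nhds (quantile ν x))) ∧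
    (∀ n, Measure.map (quantile (μs n)) P01 = μs n) := by
  refine ⟨?_, fun n => map_quantile_P01⟩
  have hD : Dense {u | Tendsto (fun n => cdf (μs n) u) atTop (𝓝 (cdf ν u))} :=
    (dense_setOf_measure_singleton_eq_zero ν).mono fun u hu => tendsto_cdf_of_weakTendsto hw hu
  have hjumps := (monotoneOn_quantile (ν := ν)).countable_not_continuousWithinAt
  rw [P01, ae_restrict_iff' measurableSet_Ioo]
  filter_upwards [hjumps.ae_notMem volume] with x hx hxI
  have hc : ContinuousAt (quantile ν) x :=
    (not_not.1 fun h => hx ⟨hxI, h⟩).continuousAt (Ioo_mem_nhds hxI.1 hxI.2)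
  exact tendsto_quantile_of_tendsto_cdf hD hxI hc
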